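/- arXiv:1001.1776 — 2 statements merged into one kernel-verified Lean document; each statement's English description precedes it below -/
import Mathlib

section
/- The order-ℏ² term of the Jacobiator of the Moyal-type bracket vanishes: for all smooth functions f, g, h : ℝ^n → ℝ, the cyclic sum P_1(f, P_3(g,h)) + P_3(f, P_1(g,h)) + P_1(g, P_3(h,f)) + P_3(g, P_1(h,f)) + P_1(h, P_3(f,g)) + P_3(h, P_1(f,g)) = 0; equivalently, C_1 = P_3/3! is a 2-cocycle of the bosonic Poisson algebra with coefficients in the adjoint representation. -/
open MeasureTheory Finset

noncomputable section

/-- The constant Poisson bracket `{f,g}(x) = ∑_{A,B} ∂_A f(x) ω^{AB} ∂_B g(x)`. -/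
def pbr {n : ℕ} (ω : Matrix (Fin n) (Fin n) ℝ) (f g : (Fin n → ℝ) → ℝ) :
    (Fin n → ℝ) → ℝ :=
  fun x => ∑ A : Fin n, ∑ B : Fin n,
    fderiv ℝ f x (Pi.single A 1) * ω A B * fderiv ℝ g x (Pi.single B 1)

/-- Membership in `D = C_c^∞(ℝ^n)`: smooth with compact support. -/
def IsCcSmooth {n : ℕ} (f : (Fin n → ℝ) → ℝ) : Prop :=
  ContDiff ℝ (⊤ : ℕ∞) f ∧ HasCompactSupport f

/-- `f̄ = ∫_{ℝ^n} f(x) dx`. -/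
def intR {n : ℕ} (f : (Fin n → ℝ) → ℝ) : ℝ := ∫ x, f x

/-- The operator `ℰ f = f - (1/2) ∑_A x_A ∂_A f`. -/
def eulerE {n : ℕ} (f : (Fin n → ℝ) → ℝ) : (Fin n → ℝ) → ℝ :=
  fun x => f x - (1/2) * ∑ A : Fin n, x A * fderiv ℝ f x (Pi.single A 1)

/-- The 2-cochain `m₃(f,g) = (ℰf)·ḡ - (ℰg)·f̄`. -/
def m3 {n : ℕ} (f g : (Fin n → ℝ) → ℝ) : (Fin n → ℝ) → ℝ :=
  fun x => eulerE f x * intR g - eulerE g x * intR f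

/-- The 2-cochain `m_ζ(f,g) = {ζ,f}·ḡ - {ζ,g}·f̄`. -/
def mzeta {n : ℕ} (ω : Matrix (Fin n) (Fin n) ℝ) (ζ f g : (Fin n → ℝ) → ℝ) :
    (Fin n → ℝ) → ℝ :=
  fun x => pbr ω ζ f x * intR g - pbr ω ζ g x * intR f


/-- The iterated bidifferential operator
`P_k(f,g)(x) = ∑ ω^{A₁B₁}⋯ω^{AₖBₖ} (∂_{A₁}⋯∂_{Aₖ}f)(x) (∂_{B₁}⋯∂_{Bₖ}g)(x)`,
so that `P₀(f,g) = f·g` and `P₁(f,g) = {f,g}`. -/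
def Pk {n : ℕ} (ω : Matrix (Fin n) (Fin n) ℝ) (k : ℕ) (f g : (Fin n → ℝ) → ℝ) :
    (Fin n → ℝ) → ℝ :=
  fun x => ∑ A : Fin k → Fin n, ∑ B : Fin k → Fin n,
    (∏ i : Fin k, ω (A i) (B i))
      * iteratedFDeriv ℝ k f x (fun i => Pi.single (A i) 1)
      * iteratedFDeriv ℝ k g x (fun i => Pi.single (B i) 1)


namespace Moyal13

open Finset

variable {n : ℕ}

/-- Partial derivative in coordinate direction `i`. -/
def pd (i : Fin n) (u : (Fin n → ℝ) → ℝ) : (Fin n → ℝ) → ℝ :=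
  fun x => fderiv ℝ u x (Pi.single i 1)

lemma pd_contDiff {u : (Fin n → ℝ) → ℝ} (hu : ContDiff ℝ (⊤ : ℕ∞) u) (i : Fin n) :
    ContDiff ℝ (⊤ : ℕ∞) (pd i u) := by
  have h1 : ContDiff ℝ (⊤ : ℕ∞) (fderiv ℝ u) := hu.fderiv_right (by simp)
  exact (ContinuousLinearMap.apply ℝ ℝ (Pi.single i 1 : Fin n → ℝ)).contDiff.comp h1

lemma pd_comm {u : (Fin n → ℝ) → ℝ} (hu : ContDiff ℝ (⊤ : ℕ∞) u) (i j : Fin n) :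
    pd i (pd j u) = pd j (pd i u) := by
  funext x
  have hdu : Differentiable ℝ (fderiv ℝ u) :=
    (hu.fderiv_right (by simp : ((⊤ : ℕ∞) : WithTop ℕ∞) + 1 ≤ ((⊤ : ℕ∞) : WithTop ℕ∞))).differentiable (by simp)
  have key : ∀ (v w : Fin n → ℝ),
      fderiv ℝ (fun y => fderiv ℝ u y w) x v = fderiv ℝ (fderiv ℝ u) x v w := by
    intro v w
    have hcomp := ((ContinuousLinearMap.apply ℝ ℝ w).hasFDerivAt.comp x
      (hdu x).hasFDerivAt).fderiv
    rw [show ((⇑(ContinuousLinearMap.apply ℝ ℝ w)) ∘ fderiv ℝ u)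
        = fun y => fderiv ℝ u y w from rfl] at hcomp
    rw [hcomp]
    rfl
  have hsymm := (hu.contDiffAt (x := x)).isSymmSndFDerivAt (by rw [minSmoothness_of_isRCLikeNormedField]; exact WithTop.coe_le_coe.mpr le_top)
  show fderiv ℝ (fun y => fderiv ℝ u y (Pi.single j 1)) x (Pi.single i 1)
      = fderiv ℝ (fun y => fderiv ℝ u y (Pi.single i 1)) x (Pi.single j 1)
  rw [key, key]
  exact hsymm _ _

lemma pd_sum {ι : Type*} [Fintype ι] (u : ι → (Fin n → ℝ) → ℝ)
    (hu : ∀ s, Differentiable ℝ (u s)) (i : Fin n) :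
    pd i (fun x => ∑ s, u s x) = fun x => ∑ s, pd i (u s) x := by
  funext x
  show fderiv ℝ (fun x => ∑ s, u s x) x (Pi.single i 1) = _
  rw [fderiv_fun_sum (fun s _ => (hu s).differentiableAt)]
  simp [pd]

lemma pd_add (u v : (Fin n → ℝ) → ℝ) (hu : Differentiable ℝ u)
    (hv : Differentiable ℝ v) (i : Fin n) :
    pd i (fun x => u x + v x) = fun x => pd i u x + pd i v x := by
  funext x
  show fderiv ℝ (fun x => u x + v x) x (Pi.single i 1) = _
  rw [fderiv_fun_add (hu.differentiableAt) (hv.differentiableAt)]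
  rfl

lemma pd_mul (u v : (Fin n → ℝ) → ℝ) (hu : Differentiable ℝ u)
    (hv : Differentiable ℝ v) (i : Fin n) :
    pd i (fun x => u x * v x) = fun x => pd i u x * v x + u x * pd i v x := by
  funext x
  show fderiv ℝ (fun x => u x * v x) x (Pi.single i 1) = _
  rw [fderiv_fun_mul (hu.differentiableAt) (hv.differentiableAt)]
  simp [pd]
  ring

lemma pd_const_mul (u : (Fin n → ℝ) → ℝ) (hu : Differentiable ℝ u)
    (c : ℝ) (i : Fin n) :
    pd i (fun x => c * u x) = fun x => c * pd i u x := by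
  funext x
  show fderiv ℝ (fun x => c * u x) x (Pi.single i 1) = _
  rw [fderiv_const_mul (hu.differentiableAt)]
  rfl

/-- Third-order coordinate derivative (tuple version). -/
def pdt (A : Fin 3 → Fin n) (u : (Fin n → ℝ) → ℝ) : (Fin n → ℝ) → ℝ :=
  pd (A 0) (pd (A 1) (pd (A 2) u))

lemma pdt_contDiff {u : (Fin n → ℝ) → ℝ} (hu : ContDiff ℝ (⊤ : ℕ∞) u) (A : Fin 3 → Fin n) :
    ContDiff ℝ (⊤ : ℕ∞) (pdt A u) :=
  pd_contDiff (pd_contDiff (pd_contDiff hu _) _) _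

lemma swap3_12 {u : (Fin n → ℝ) → ℝ} (hu : ContDiff ℝ (⊤ : ℕ∞) u) (i j k : Fin n) :
    pd i (pd j (pd k u)) = pd j (pd i (pd k u)) :=
  pd_comm (pd_contDiff hu k) i j

lemma swap3_23 {u : (Fin n → ℝ) → ℝ} (hu : ContDiff ℝ (⊤ : ℕ∞) u) (i j k : Fin n) :
    pd i (pd j (pd k u)) = pd i (pd k (pd j u)) :=
  congrArg (pd i) (pd_comm hu j k)

lemma rev3 {u : (Fin n → ℝ) → ℝ} (hu : ContDiff ℝ (⊤ : ℕ∞) u) (i j k : Fin n) :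
    pd i (pd j (pd k u)) = pd k (pd j (pd i u)) := by
  rw [swap3_23 hu, swap3_12 hu, swap3_23 hu]

lemma rot3 {u : (Fin n → ℝ) → ℝ} (hu : ContDiff ℝ (⊤ : ℕ∞) u) (i j k : Fin n) :
    pd j (pd k (pd i u)) = pd i (pd j (pd k u)) := by
  rw [swap3_23 hu, swap3_12 hu]

lemma rot4 {u : (Fin n → ℝ) → ℝ} (hu : ContDiff ℝ (⊤ : ℕ∞) u) (b i j k : Fin n) :
    pd b (pd i (pd j (pd k u))) = pd i (pd j (pd k (pd b u))) := by
  rw [pd_comm (pd_contDiff (pd_contDiff hu k) j) b i]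
  rw [congrArg (pd i) (pd_comm (pd_contDiff hu k) b j)]
  rw [congrArg (pd i) (congrArg (pd j) (pd_comm hu b k))]

def pdIter : {k : ℕ} → (Fin k → Fin n) → ((Fin n → ℝ) → ℝ) → ((Fin n → ℝ) → ℝ)
  | 0, _, u => u
  | _+1, A, u => pd (A 0) (pdIter (Fin.tail A) u)

lemma fderiv_multi_apply {k : ℕ}
    (w : (Fin n → ℝ) → ContinuousMultilinearMap ℝ (fun _ : Fin k => (Fin n → ℝ)) ℝ)
    {x : Fin n → ℝ} (hw : DifferentiableAt ℝ w x)
    (m : Fin k → Fin n → ℝ) (v : Fin n → ℝ) :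
    fderiv ℝ (fun y => w y m) x v = fderiv ℝ w x v m := by
  have hcomp := ((ContinuousMultilinearMap.apply ℝ
      (fun _ : Fin k => (Fin n → ℝ)) ℝ m).hasFDerivAt.comp x hw.hasFDerivAt).fderiv
  rw [show ((⇑(ContinuousMultilinearMap.apply ℝ (fun _ : Fin k => (Fin n → ℝ)) ℝ m))
      ∘ w) = fun y => w y m from rfl] at hcomp
  rw [hcomp]
  rfl

lemma itd_eq {u : (Fin n → ℝ) → ℝ} (hu : ContDiff ℝ (⊤ : ℕ∞) u) :
    ∀ {k : ℕ} (A : Fin k → Fin n) (x : Fin n → ℝ),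
      iteratedFDeriv ℝ k u x (fun i => Pi.single (A i) 1) = pdIter A u x
  | 0, A, x => by simp [pdIter]
  | k+1, A, x => by
    rw [iteratedFDeriv_succ_apply_left]
    have hd : DifferentiableAt ℝ (iteratedFDeriv ℝ k u) x :=
      ((hu.iteratedFDeriv_right (m := 1) (by exact_mod_cast le_top)).differentiable one_ne_zero).differentiableAt
    have h1 := (fderiv_multi_apply (iteratedFDeriv ℝ k u) hd
        (Fin.tail fun i => (Pi.single (A i) 1 : Fin n → ℝ)) (Pi.single (A 0) 1)).symm
    rw [h1]
    have h2 : (fun y => iteratedFDeriv ℝ k u y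
          (Fin.tail fun i => (Pi.single (A i) 1 : Fin n → ℝ)))
        = pdIter (Fin.tail A) u := by
      funext y; exact itd_eq hu (Fin.tail A) y
    rw [h2]
    rfl

variable (ω : Matrix (Fin n) (Fin n) ℝ)

def w3 (A B : Fin 3 → Fin n) : ℝ := ω (A 0) (B 0) * ω (A 1) (B 1) * ω (A 2) (B 2)

def Q1 (u v : (Fin n → ℝ) → ℝ) : (Fin n → ℝ) → ℝ :=
  fun x => ∑ a : Fin n, ∑ b : Fin n, ω a b * (pd a u x * pd b v x)

def Q3 (u v : (Fin n → ℝ) → ℝ) : (Fin n → ℝ) → ℝ :=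
  fun x => ∑ A : Fin 3 → Fin n, ∑ B : Fin 3 → Fin n, w3 ω A B * (pdt A u x * pdt B v x)

def R2 (u v : (Fin n → ℝ) → ℝ) (e : Fin n) : (Fin n → ℝ) → ℝ :=
  fun x => ∑ a : Fin n, ∑ b : Fin n, ω a b *
    (pd e (pd a u) x * pd b v x + pd a u x * pd e (pd b v) x)

def R3 (u v : (Fin n → ℝ) → ℝ) (d e : Fin n) : (Fin n → ℝ) → ℝ :=
  fun x => ∑ a : Fin n, ∑ b : Fin n, ω a b *
    ((pd d (pd e (pd a u)) x * pd b v x + pd e (pd a u) x * pd d (pd b v) x)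
    + (pd d (pd a u) x * pd e (pd b v) x + pd a u x * pd d (pd e (pd b v)) x))

variable {u v : (Fin n → ℝ) → ℝ}

lemma Q1_contDiff (hu : ContDiff ℝ (⊤ : ℕ∞) u) (hv : ContDiff ℝ (⊤ : ℕ∞) v) :
    ContDiff ℝ (⊤ : ℕ∞) (Q1 ω u v) := by
  refine ContDiff.sum fun a _ => ContDiff.sum fun b _ => ?_
  exact contDiff_const.mul ((pd_contDiff hu a).mul (pd_contDiff hv b))

lemma pd_Q3 (hu : ContDiff ℝ (⊤ : ℕ∞) u) (hv : ContDiff ℝ (⊤ : ℕ∞) v) (i : Fin n) :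
    pd i (Q3 ω u v) = fun x => ∑ A : Fin 3 → Fin n, ∑ B : Fin 3 → Fin n,
      w3 ω A B * (pd i (pdt A u) x * pdt B v x + pdt A u x * pd i (pdt B v) x) := by
  have hinner : ∀ A : Fin 3 → Fin n,
      Differentiable ℝ (fun x => ∑ B : Fin 3 → Fin n, w3 ω A B * (pdt A u x * pdt B v x)) := by
    intro A
    refine Differentiable.fun_sum fun B _ => ?_
    exact (contDiff_const.mul ((pdt_contDiff hu A).mul (pdt_contDiff hv B))).differentiable (by simp)
  rw [show Q3 ω u v = fun x => ∑ A : Fin 3 → Fin n,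
      (fun x => ∑ B : Fin 3 → Fin n, w3 ω A B * (pdt A u x * pdt B v x)) x from rfl]
  rw [pd_sum _ hinner i]
  funext x
  refine Finset.sum_congr rfl fun A _ => ?_
  rw [pd_sum (fun B => fun x => w3 ω A B * (pdt A u x * pdt B v x))
    (fun B => (contDiff_const.mul ((pdt_contDiff hu A).mul
      (pdt_contDiff hv B))).differentiable (by simp)) i]
  refine Finset.sum_congr rfl fun B _ => ?_
  rw [pd_const_mul (fun x => pdt A u x * pdt B v x)
    (((pdt_contDiff hu A).mul (pdt_contDiff hv B)).differentiable (by simp)) (w3 ω A B) i]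
  rw [pd_mul (pdt A u) (pdt B v) ((pdt_contDiff hu A).differentiable (by simp))
    ((pdt_contDiff hv B).differentiable (by simp)) i]

lemma pd_Q1 (hu : ContDiff ℝ (⊤ : ℕ∞) u) (hv : ContDiff ℝ (⊤ : ℕ∞) v) (e : Fin n) :
    pd e (Q1 ω u v) = R2 ω u v e := by
  have d1 : ∀ (w : (Fin n → ℝ) → ℝ), ContDiff ℝ (⊤ : ℕ∞) w → ∀ i : Fin n,
      Differentiable ℝ (pd i w) := fun w hw i => (pd_contDiff hw i).differentiable (by simp)
  rw [show Q1 ω u v = fun x => ∑ a : Fin n,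
      (fun x => ∑ b : Fin n, ω a b * (pd a u x * pd b v x)) x from rfl]
  rw [pd_sum (fun a => fun x => ∑ b : Fin n, ω a b * (pd a u x * pd b v x))
    (fun a => Differentiable.fun_sum fun b _ =>
    (contDiff_const.mul ((pd_contDiff hu a).mul (pd_contDiff hv b))).differentiable (by simp)) e]
  funext x
  refine Finset.sum_congr rfl fun a _ => ?_
  rw [pd_sum (fun b => fun x => ω a b * (pd a u x * pd b v x))
    (fun b => (contDiff_const.mul ((pd_contDiff hu a).mul
      (pd_contDiff hv b))).differentiable (by simp)) e]
  refine Finset.sum_congr rfl fun b _ => ?_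
  rw [pd_const_mul (fun x => pd a u x * pd b v x)
    (((pd_contDiff hu a).mul (pd_contDiff hv b)).differentiable (by simp)) (ω a b) e]
  rw [pd_mul (pd a u) (pd b v) (d1 u hu a) (d1 v hv b) e]

lemma pd_R2 (hu : ContDiff ℝ (⊤ : ℕ∞) u) (hv : ContDiff ℝ (⊤ : ℕ∞) v) (d e : Fin n) :
    pd d (R2 ω u v e) = R3 ω u v d e := by
  have c1 : ∀ (w : (Fin n → ℝ) → ℝ), ContDiff ℝ (⊤ : ℕ∞) w → ∀ i : Fin n,
      ContDiff ℝ (⊤ : ℕ∞) (pd i w) := fun w hw i => pd_contDiff hw i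
  have sm : ∀ a b : Fin n, ContDiff ℝ (⊤ : ℕ∞)
      (fun x => pd e (pd a u) x * pd b v x + pd a u x * pd e (pd b v) x) := fun a b =>
    ((c1 _ (c1 u hu a) e).mul (c1 v hv b)).add ((c1 u hu a).mul (c1 _ (c1 v hv b) e))
  rw [show R2 ω u v e = fun x => ∑ a : Fin n, (fun x => ∑ b : Fin n, ω a b *
      (pd e (pd a u) x * pd b v x + pd a u x * pd e (pd b v) x)) x from rfl]
  rw [pd_sum (fun a => fun x => ∑ b : Fin n, ω a b *
      (pd e (pd a u) x * pd b v x + pd a u x * pd e (pd b v) x))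
    (fun a => Differentiable.fun_sum fun b _ =>
    (contDiff_const.mul (sm a b)).differentiable (by simp)) d]
  funext x
  refine Finset.sum_congr rfl fun a _ => ?_
  rw [pd_sum (fun b => fun x => ω a b *
      (pd e (pd a u) x * pd b v x + pd a u x * pd e (pd b v) x))
    (fun b => (contDiff_const.mul (sm a b)).differentiable (by simp)) d]
  refine Finset.sum_congr rfl fun b _ => ?_
  rw [pd_const_mul _ ((sm a b).differentiable (by simp)) (ω a b) d]
  rw [pd_add (fun x => pd e (pd a u) x * pd b v x)
      (fun x => pd a u x * pd e (pd b v) x)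
      (((c1 _ (c1 u hu a) e).mul (c1 v hv b)).differentiable (by simp))
      (((c1 u hu a).mul (c1 _ (c1 v hv b) e)).differentiable (by simp)) d]
  rw [pd_mul (pd e (pd a u)) (pd b v)
      ((c1 _ (c1 u hu a) e).differentiable (by simp)) ((c1 v hv b).differentiable (by simp)) d]
  rw [pd_mul (pd a u) (pd e (pd b v))
      ((c1 u hu a).differentiable (by simp)) ((c1 _ (c1 v hv b) e).differentiable (by simp)) d]

lemma pd_R3 (hu : ContDiff ℝ (⊤ : ℕ∞) u) (hv : ContDiff ℝ (⊤ : ℕ∞) v) (c d e : Fin n) :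
    pd c (R3 ω u v d e) = fun x => ∑ a : Fin n, ∑ b : Fin n, ω a b *
      (((pd c (pd d (pd e (pd a u))) x * pd b v x
          + pd d (pd e (pd a u)) x * pd c (pd b v) x)
        + (pd c (pd e (pd a u)) x * pd d (pd b v) x
          + pd e (pd a u) x * pd c (pd d (pd b v)) x))
      + ((pd c (pd d (pd a u)) x * pd e (pd b v) x
          + pd d (pd a u) x * pd c (pd e (pd b v)) x)
        + (pd c (pd a u) x * pd d (pd e (pd b v)) x
          + pd a u x * pd c (pd d (pd e (pd b v))) x))) := by
  have c1 : ∀ (w : (Fin n → ℝ) → ℝ), ContDiff ℝ (⊤ : ℕ∞) w → ∀ i : Fin n,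
      ContDiff ℝ (⊤ : ℕ∞) (pd i w) := fun w hw i => pd_contDiff hw i
  have hu1 := fun i => c1 u hu i
  have hv1 := fun i => c1 v hv i
  have hu2 := fun i j => c1 _ (hu1 j) i
  have hv2 := fun i j => c1 _ (hv1 j) i
  have hu3 := fun i j k => c1 _ (hu2 j k) i
  have hv3 := fun i j k => c1 _ (hv2 j k) i
  have smW : ∀ a b : Fin n, ContDiff ℝ (⊤ : ℕ∞)
      (fun x => pd d (pd e (pd a u)) x * pd b v x + pd e (pd a u) x * pd d (pd b v) x) :=
    fun a b => ((hu3 d e a).mul (hv1 b)).add ((hu2 e a).mul (hv2 d b))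
  have smZ : ∀ a b : Fin n, ContDiff ℝ (⊤ : ℕ∞)
      (fun x => pd d (pd a u) x * pd e (pd b v) x + pd a u x * pd d (pd e (pd b v)) x) :=
    fun a b => ((hu2 d a).mul (hv2 e b)).add ((hu1 a).mul (hv3 d e b))
  rw [show R3 ω u v d e = fun x => ∑ a : Fin n, (fun x => ∑ b : Fin n, ω a b *
      ((pd d (pd e (pd a u)) x * pd b v x + pd e (pd a u) x * pd d (pd b v) x)
      + (pd d (pd a u) x * pd e (pd b v) x + pd a u x * pd d (pd e (pd b v)) x))) x from rfl]
  rw [pd_sum (fun a => fun x => ∑ b : Fin n, ω a b *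
      ((pd d (pd e (pd a u)) x * pd b v x + pd e (pd a u) x * pd d (pd b v) x)
      + (pd d (pd a u) x * pd e (pd b v) x + pd a u x * pd d (pd e (pd b v)) x)))
    (fun a => Differentiable.fun_sum fun b _ =>
    (contDiff_const.mul ((smW a b).add (smZ a b))).differentiable (by simp)) c]
  funext x
  refine Finset.sum_congr rfl fun a _ => ?_
  rw [pd_sum (fun b => fun x => ω a b *
      ((pd d (pd e (pd a u)) x * pd b v x + pd e (pd a u) x * pd d (pd b v) x)
      + (pd d (pd a u) x * pd e (pd b v) x + pd a u x * pd d (pd e (pd b v)) x)))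
    (fun b => (contDiff_const.mul ((smW a b).add (smZ a b))).differentiable (by simp)) c]
  refine Finset.sum_congr rfl fun b _ => ?_
  rw [pd_const_mul _ (((smW a b).add (smZ a b)).differentiable (by simp)) (ω a b) c]
  rw [pd_add _ _ ((smW a b).differentiable (by simp)) ((smZ a b).differentiable (by simp)) c]
  rw [pd_add (fun x => pd d (pd e (pd a u)) x * pd b v x)
      (fun x => pd e (pd a u) x * pd d (pd b v) x)
      (((hu3 d e a).mul (hv1 b)).differentiable (by simp))
      (((hu2 e a).mul (hv2 d b)).differentiable (by simp)) c]
  rw [pd_add (fun x => pd d (pd a u) x * pd e (pd b v) x)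
      (fun x => pd a u x * pd d (pd e (pd b v)) x)
      (((hu2 d a).mul (hv2 e b)).differentiable (by simp))
      (((hu1 a).mul (hv3 d e b)).differentiable (by simp)) c]
  rw [pd_mul (pd d (pd e (pd a u))) (pd b v)
      ((hu3 d e a).differentiable (by simp)) ((hv1 b).differentiable (by simp)) c]
  rw [pd_mul (pd e (pd a u)) (pd d (pd b v))
      ((hu2 e a).differentiable (by simp)) ((hv2 d b).differentiable (by simp)) c]
  rw [pd_mul (pd d (pd a u)) (pd e (pd b v))
      ((hu2 d a).differentiable (by simp)) ((hv2 e b).differentiable (by simp)) c]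
  rw [pd_mul (pd a u) (pd d (pd e (pd b v)))
      ((hu1 a).differentiable (by simp)) ((hv3 d e b).differentiable (by simp)) c]

lemma sum_fun_one {M : Type*} [AddCommMonoid M] (φ : (Fin 1 → Fin n) → M) :
    ∑ A : Fin 1 → Fin n, φ A = ∑ a : Fin n, φ (fun _ => a) :=
  (Fintype.sum_equiv ((Equiv.funUnique (Fin 1) (Fin n)).symm)
    (fun a => φ (fun _ => a)) φ (fun _ => rfl)).symm

lemma Pk_one_eq (u v : (Fin n → ℝ) → ℝ) : Pk ω 1 u v = Q1 ω u v := by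
  funext x
  show ∑ A : Fin 1 → Fin n, ∑ B : Fin 1 → Fin n,
      (∏ i : Fin 1, ω (A i) (B i))
      * iteratedFDeriv ℝ 1 u x (fun i => Pi.single (A i) 1)
      * iteratedFDeriv ℝ 1 v x (fun i => Pi.single (B i) 1) = _
  rw [sum_fun_one]
  refine Finset.sum_congr rfl fun a _ => ?_
  rw [sum_fun_one]
  refine Finset.sum_congr rfl fun b _ => ?_
  simp only [Fin.prod_univ_one, iteratedFDeriv_one_apply]
  show ω a b * fderiv ℝ u x (Pi.single a 1) * fderiv ℝ v x (Pi.single b 1) = _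
  unfold pd
  ring

lemma Pk_three_eq (hu : ContDiff ℝ (⊤ : ℕ∞) u) (hv : ContDiff ℝ (⊤ : ℕ∞) v) :
    Pk ω 3 u v = Q3 ω u v := by
  funext x
  refine Finset.sum_congr rfl fun A _ => ?_
  refine Finset.sum_congr rfl fun B _ => ?_
  rw [itd_eq hu A x, itd_eq hv B x]
  rw [show pdIter A u = pdt A u from rfl, show pdIter B v = pdt B v from rfl]
  rw [Fin.prod_univ_three]
  show w3 ω A B * pdt A u x * pdt B v x = _
  ring

/-- The flattened index type. -/
abbrev Pt (n : ℕ) := ((Fin 3 → Fin n) × (Fin 3 → Fin n)) × (Fin n × Fin n)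

lemma flatJ' (F : Pt n → ℝ) :
    ∑ p : Pt n, F p
      = ∑ q : (Fin 3 → Fin n) × (Fin 3 → Fin n), ∑ r : Fin n × Fin n, F (q, r) :=
  Fintype.sum_prod_type F

lemma flatJ (F : Pt n → ℝ) :
    ∑ p : Pt n, F p
      = ∑ A : Fin 3 → Fin n, ∑ B : Fin 3 → Fin n, ∑ a : Fin n, ∑ b : Fin n,
        F ((A, B), (a, b)) := by
  rw [flatJ' F]
  have h1 : ∀ q : (Fin 3 → Fin n) × (Fin 3 → Fin n),
      (∑ r : Fin n × Fin n, F (q, r)) = ∑ a : Fin n, ∑ b : Fin n, F (q, (a, b)) :=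
    fun q => Fintype.sum_prod_type _
  simp only [h1]
  exact Fintype.sum_prod_type _

lemma flatI (F : Pt n → ℝ) :
    ∑ p : Pt n, F p
      = ∑ a : Fin n, ∑ b : Fin n, ∑ A : Fin 3 → Fin n, ∑ B : Fin 3 → Fin n,
        F ((A, B), (a, b)) := by
  rw [flatJ' F, Finset.sum_comm]
  rw [Fintype.sum_prod_type
    (fun r : Fin n × Fin n => ∑ q : (Fin 3 → Fin n) × (Fin 3 → Fin n), F (q, r))]
  refine Finset.sum_congr rfl fun a _ => Finset.sum_congr rfl fun b _ => ?_
  rw [Fintype.sum_prod_type (fun q : (Fin 3 → Fin n) × (Fin 3 → Fin n) => F (q, (a, b)))]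

section Terms

variable (u v w : (Fin n → ℝ) → ℝ) (x : Fin n → ℝ)

def X1t (A B : Fin 3 → Fin n) (a b : Fin n) : ℝ :=
  ω a b * w3 ω A B * pd a u x * pd b (pdt A v) x * pdt B w x
def X2t (A B : Fin 3 → Fin n) (a b : Fin n) : ℝ :=
  ω a b * w3 ω A B * pd a u x * pdt A v x * pd b (pdt B w) x
def Y1t (A B : Fin 3 → Fin n) (a b : Fin n) : ℝ :=
  ω a b * w3 ω A B * pdt A u x
    * pd (B 0) (pd (B 1) (pd (B 2) (pd a v))) x * pd b w x
def Y2t (A B : Fin 3 → Fin n) (a b : Fin n) : ℝ :=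
  ω a b * w3 ω A B * pdt A u x
    * pd (B 1) (pd (B 2) (pd a v)) x * pd (B 0) (pd b w) x
def Y3t (A B : Fin 3 → Fin n) (a b : Fin n) : ℝ :=
  ω a b * w3 ω A B * pdt A u x
    * pd (B 0) (pd (B 2) (pd a v)) x * pd (B 1) (pd b w) x
def Y4t (A B : Fin 3 → Fin n) (a b : Fin n) : ℝ :=
  ω a b * w3 ω A B * pdt A u x
    * pd (B 2) (pd a v) x * pd (B 0) (pd (B 1) (pd b w)) x
def Y5t (A B : Fin 3 → Fin n) (a b : Fin n) : ℝ :=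
  ω a b * w3 ω A B * pdt A u x
    * pd (B 0) (pd (B 1) (pd a v)) x * pd (B 2) (pd b w) x
def Y6t (A B : Fin 3 → Fin n) (a b : Fin n) : ℝ :=
  ω a b * w3 ω A B * pdt A u x
    * pd (B 1) (pd a v) x * pd (B 0) (pd (B 2) (pd b w)) x
def Y7t (A B : Fin 3 → Fin n) (a b : Fin n) : ℝ :=
  ω a b * w3 ω A B * pdt A u x
    * pd (B 0) (pd a v) x * pd (B 1) (pd (B 2) (pd b w)) x
def Y8t (A B : Fin 3 → Fin n) (a b : Fin n) : ℝ :=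
  ω a b * w3 ω A B * pdt A u x
    * pd a v x * pd (B 0) (pd (B 1) (pd (B 2) (pd b w))) x

end Terms

section Pieces

variable {w : (Fin n → ℝ) → ℝ} (x : Fin n → ℝ)

lemma pieceI (hu : ContDiff ℝ (⊤ : ℕ∞) u) (hv : ContDiff ℝ (⊤ : ℕ∞) v) (hw : ContDiff ℝ (⊤ : ℕ∞) w) :
    Pk ω 1 u (Pk ω 3 v w) x
      = (∑ p : Pt n, X1t ω u v w x p.1.1 p.1.2 p.2.1 p.2.2)
      + (∑ p : Pt n, X2t ω u v w x p.1.1 p.1.2 p.2.1 p.2.2) := by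
  rw [Pk_one_eq, Pk_three_eq ω hv hw]
  rw [← Finset.sum_add_distrib, flatI]
  show ∑ a : Fin n, ∑ b : Fin n, ω a b * (pd a u x * pd b (Q3 ω v w) x) = _
  simp only [pd_Q3 ω hv hw]
  refine Finset.sum_congr rfl fun a _ => Finset.sum_congr rfl fun b _ => ?_
  rw [Finset.mul_sum, Finset.mul_sum]
  refine Finset.sum_congr rfl fun A _ => ?_
  rw [Finset.mul_sum, Finset.mul_sum]
  refine Finset.sum_congr rfl fun B _ => ?_
  unfold X1t X2t
  ring

lemma pieceJ (hu : ContDiff ℝ (⊤ : ℕ∞) u) (hv : ContDiff ℝ (⊤ : ℕ∞) v) (hw : ContDiff ℝ (⊤ : ℕ∞) w) :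
    Pk ω 3 u (Pk ω 1 v w) x
      = (∑ p : Pt n, Y1t ω u v w x p.1.1 p.1.2 p.2.1 p.2.2)
      + (∑ p : Pt n, Y2t ω u v w x p.1.1 p.1.2 p.2.1 p.2.2)
      + (∑ p : Pt n, Y3t ω u v w x p.1.1 p.1.2 p.2.1 p.2.2)
      + (∑ p : Pt n, Y4t ω u v w x p.1.1 p.1.2 p.2.1 p.2.2)
      + (∑ p : Pt n, Y5t ω u v w x p.1.1 p.1.2 p.2.1 p.2.2)
      + (∑ p : Pt n, Y6t ω u v w x p.1.1 p.1.2 p.2.1 p.2.2)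
      + (∑ p : Pt n, Y7t ω u v w x p.1.1 p.1.2 p.2.1 p.2.2)
      + (∑ p : Pt n, Y8t ω u v w x p.1.1 p.1.2 p.2.1 p.2.2) := by
  rw [Pk_one_eq, Pk_three_eq ω hu (Q1_contDiff ω hv hw)]
  rw [← Finset.sum_add_distrib, ← Finset.sum_add_distrib, ← Finset.sum_add_distrib,
    ← Finset.sum_add_distrib, ← Finset.sum_add_distrib, ← Finset.sum_add_distrib,
    ← Finset.sum_add_distrib, flatJ]
  show ∑ A : Fin 3 → Fin n, ∑ B : Fin 3 → Fin n,
      w3 ω A B * (pdt A u x * pdt B (Q1 ω v w) x) = _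
  have hQ : ∀ e : Fin n, pd e (Q1 ω v w) = R2 ω v w e := pd_Q1 ω hv hw
  have hR2 : ∀ d e : Fin n, pd d (R2 ω v w e) = R3 ω v w d e := pd_R2 ω hv hw
  simp only [pdt, hQ, hR2, pd_R3 ω hv hw]
  refine Finset.sum_congr rfl fun A _ => Finset.sum_congr rfl fun B _ => ?_
  rw [Finset.mul_sum, Finset.mul_sum]
  refine Finset.sum_congr rfl fun a _ => ?_
  rw [Finset.mul_sum, Finset.mul_sum]
  refine Finset.sum_congr rfl fun b _ => ?_
  unfold Y1t Y2t Y3t Y4t Y5t Y6t Y7t Y8t pdt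
  ring

end Pieces


section Cancel

variable {w : (Fin n → ℝ) → ℝ} (x : Fin n → ℝ)

def sAB : Pt n ≃ Pt n :=
  ⟨fun p => ((p.1.2, p.1.1), p.2), fun p => ((p.1.2, p.1.1), p.2),
    fun _ => rfl, fun _ => rfl⟩

def sab : Pt n ≃ Pt n :=
  ⟨fun p => (p.1, (p.2.2, p.2.1)), fun p => (p.1, (p.2.2, p.2.1)),
    fun _ => rfl, fun _ => rfl⟩

def s01 : Pt n ≃ Pt n where
  toFun p := ((![p.1.1 1, p.1.1 0, p.1.1 2], ![p.1.2 1, p.1.2 0, p.1.2 2]), p.2)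
  invFun p := ((![p.1.1 1, p.1.1 0, p.1.1 2], ![p.1.2 1, p.1.2 0, p.1.2 2]), p.2)
  left_inv p := by
    obtain ⟨⟨A, B⟩, a, b⟩ := p
    refine congrArg₂ Prod.mk (congrArg₂ Prod.mk ?_ ?_) rfl <;>
      · funext i; fin_cases i <;> rfl
  right_inv p := by
    obtain ⟨⟨A, B⟩, a, b⟩ := p
    refine congrArg₂ Prod.mk (congrArg₂ Prod.mk ?_ ?_) rfl <;>
      · funext i; fin_cases i <;> rfl

def s02 : Pt n ≃ Pt n where
  toFun p := ((![p.1.1 2, p.1.1 1, p.1.1 0], ![p.1.2 2, p.1.2 1, p.1.2 0]), p.2)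
  invFun p := ((![p.1.1 2, p.1.1 1, p.1.1 0], ![p.1.2 2, p.1.2 1, p.1.2 0]), p.2)
  left_inv p := by
    obtain ⟨⟨A, B⟩, a, b⟩ := p
    refine congrArg₂ Prod.mk (congrArg₂ Prod.mk ?_ ?_) rfl <;>
      · funext i; fin_cases i <;> rfl
  right_inv p := by
    obtain ⟨⟨A, B⟩, a, b⟩ := p
    refine congrArg₂ Prod.mk (congrArg₂ Prod.mk ?_ ?_) rfl <;>
      · funext i; fin_cases i <;> rfl

def s12 : Pt n ≃ Pt n where
  toFun p := ((![p.1.1 0, p.1.1 2, p.1.1 1], ![p.1.2 0, p.1.2 2, p.1.2 1]), p.2)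
  invFun p := ((![p.1.1 0, p.1.1 2, p.1.1 1], ![p.1.2 0, p.1.2 2, p.1.2 1]), p.2)
  left_inv p := by
    obtain ⟨⟨A, B⟩, a, b⟩ := p
    refine congrArg₂ Prod.mk (congrArg₂ Prod.mk ?_ ?_) rfl <;>
      · funext i; fin_cases i <;> rfl
  right_inv p := by
    obtain ⟨⟨A, B⟩, a, b⟩ := p
    refine congrArg₂ Prod.mk (congrArg₂ Prod.mk ?_ ?_) rfl <;>
      · funext i; fin_cases i <;> rfl

def s0 : Pt n ≃ Pt n where
  toFun p := ((![p.1.2 1, p.1.2 2, p.2.2], ![p.1.1 1, p.1.1 2, p.2.1]), (p.1.1 0, p.1.2 0))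
  invFun p := ((![p.2.1, p.1.2 0, p.1.2 1], ![p.2.2, p.1.1 0, p.1.1 1]), (p.1.2 2, p.1.1 2))
  left_inv p := by
    obtain ⟨⟨A, B⟩, a, b⟩ := p
    refine congrArg₂ Prod.mk (congrArg₂ Prod.mk ?_ ?_) (congrArg₂ Prod.mk ?_ ?_) <;>
      first
      | rfl
      | (funext i; fin_cases i <;> rfl)
  right_inv p := by
    obtain ⟨⟨A, B⟩, a, b⟩ := p
    refine congrArg₂ Prod.mk (congrArg₂ Prod.mk ?_ ?_) (congrArg₂ Prod.mk ?_ ?_) <;>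
      first
      | rfl
      | (funext i; fin_cases i <;> rfl)

lemma cancelA (hanti : ∀ i j : Fin n, ω j i = -ω i j) (hu : ContDiff ℝ (⊤ : ℕ∞) u) (hv : ContDiff ℝ (⊤ : ℕ∞) v) (hw : ContDiff ℝ (⊤ : ℕ∞) w) :
    (∑ p : Pt n, X1t ω u v w x p.1.1 p.1.2 p.2.1 p.2.2)
    + (∑ p : Pt n, Y8t ω w u v x p.1.1 p.1.2 p.2.1 p.2.2) = 0 := by
  rw [← Equiv.sum_comp (sAB (n := n))
    (fun p : Pt n => Y8t ω w u v x p.1.1 p.1.2 p.2.1 p.2.2)]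
  rw [← Finset.sum_add_distrib]
  refine Finset.sum_eq_zero fun p _ => ?_
  obtain ⟨⟨A, B⟩, a, b⟩ := p
  show X1t ω u v w x A B a b + Y8t ω w u v x B A a b = 0
  unfold X1t Y8t pdt w3
  rw [rot4 hv b (A 0) (A 1) (A 2)]
  rw [hanti (A 0) (B 0), hanti (A 1) (B 1), hanti (A 2) (B 2)]
  ring

lemma cancelB (hanti : ∀ i j : Fin n, ω j i = -ω i j) (hu : ContDiff ℝ (⊤ : ℕ∞) u) (hv : ContDiff ℝ (⊤ : ℕ∞) v) (hw : ContDiff ℝ (⊤ : ℕ∞) w) :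
    (∑ p : Pt n, X2t ω u v w x p.1.1 p.1.2 p.2.1 p.2.2)
    + (∑ p : Pt n, Y1t ω v w u x p.1.1 p.1.2 p.2.1 p.2.2) = 0 := by
  rw [← Equiv.sum_comp (sab (n := n))
    (fun p : Pt n => Y1t ω v w u x p.1.1 p.1.2 p.2.1 p.2.2)]
  rw [← Finset.sum_add_distrib]
  refine Finset.sum_eq_zero fun p _ => ?_
  obtain ⟨⟨A, B⟩, a, b⟩ := p
  show X2t ω u v w x A B a b + Y1t ω v w u x A B b a = 0
  unfold X2t Y1t pdt w3
  rw [rot4 hw b (B 0) (B 1) (B 2)]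
  rw [hanti a b]
  ring

lemma cancelC (hanti : ∀ i j : Fin n, ω j i = -ω i j) (hu : ContDiff ℝ (⊤ : ℕ∞) u) (hv : ContDiff ℝ (⊤ : ℕ∞) v) (hw : ContDiff ℝ (⊤ : ℕ∞) w) :
    (∑ p : Pt n, Y7t ω u v w x p.1.1 p.1.2 p.2.1 p.2.2)
    + (∑ p : Pt n, Y5t ω w u v x p.1.1 p.1.2 p.2.1 p.2.2) = 0 := by
  rw [← Equiv.sum_comp (s0 (n := n))
    (fun p : Pt n => Y5t ω w u v x p.1.1 p.1.2 p.2.1 p.2.2)]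
  rw [← Finset.sum_add_distrib]
  refine Finset.sum_eq_zero fun p _ => ?_
  obtain ⟨⟨A, B⟩, a, b⟩ := p
  show Y7t ω u v w x A B a b
      + Y5t ω w u v x ![B 1, B 2, b] ![A 1, A 2, a] (A 0) (B 0) = 0
  unfold Y7t Y5t pdt w3
  simp only [Matrix.cons_val_zero, Matrix.cons_val_one, Matrix.head_cons,
    Matrix.cons_val_two, Matrix.tail_cons]
  rw [show pd (A 1) (pd (A 2) (pd (A 0) u)) = pd (A 0) (pd (A 1) (pd (A 2) u)) from
    rot3 hu (A 0) (A 1) (A 2)]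
  rw [show pd a (pd (B 0) v) = pd (B 0) (pd a v) from pd_comm hv a (B 0)]
  rw [hanti (A 1) (B 1), hanti (A 2) (B 2), hanti a b]
  ring

lemma eqD (hu : ContDiff ℝ (⊤ : ℕ∞) u) (hv : ContDiff ℝ (⊤ : ℕ∞) v) (hw : ContDiff ℝ (⊤ : ℕ∞) w) :
    (∑ p : Pt n, Y6t ω u v w x p.1.1 p.1.2 p.2.1 p.2.2)
      = ∑ p : Pt n, Y7t ω u v w x p.1.1 p.1.2 p.2.1 p.2.2 := by
  rw [← Equiv.sum_comp (s01 (n := n))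
    (fun p : Pt n => Y6t ω u v w x p.1.1 p.1.2 p.2.1 p.2.2)]
  refine Finset.sum_congr rfl fun p _ => ?_
  obtain ⟨⟨A, B⟩, a, b⟩ := p
  show Y6t ω u v w x ![A 1, A 0, A 2] ![B 1, B 0, B 2] a b = Y7t ω u v w x A B a b
  unfold Y6t Y7t pdt w3
  simp only [Matrix.cons_val_zero, Matrix.cons_val_one, Matrix.head_cons,
    Matrix.cons_val_two, Matrix.tail_cons]
  rw [show pd (A 1) (pd (A 0) (pd (A 2) u)) = pd (A 0) (pd (A 1) (pd (A 2) u)) from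
    swap3_12 hu (A 1) (A 0) (A 2)]
  ring

lemma eqE (hu : ContDiff ℝ (⊤ : ℕ∞) u) (hv : ContDiff ℝ (⊤ : ℕ∞) v) (hw : ContDiff ℝ (⊤ : ℕ∞) w) :
    (∑ p : Pt n, Y4t ω u v w x p.1.1 p.1.2 p.2.1 p.2.2)
      = ∑ p : Pt n, Y7t ω u v w x p.1.1 p.1.2 p.2.1 p.2.2 := by
  rw [← Equiv.sum_comp (s02 (n := n))
    (fun p : Pt n => Y4t ω u v w x p.1.1 p.1.2 p.2.1 p.2.2)]
  refine Finset.sum_congr rfl fun p _ => ?_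
  obtain ⟨⟨A, B⟩, a, b⟩ := p
  show Y4t ω u v w x ![A 2, A 1, A 0] ![B 2, B 1, B 0] a b = Y7t ω u v w x A B a b
  unfold Y4t Y7t pdt w3
  simp only [Matrix.cons_val_zero, Matrix.cons_val_one, Matrix.head_cons,
    Matrix.cons_val_two, Matrix.tail_cons]
  rw [show pd (A 2) (pd (A 1) (pd (A 0) u)) = pd (A 0) (pd (A 1) (pd (A 2) u)) from
    rev3 hu (A 2) (A 1) (A 0)]
  rw [show pd (B 2) (pd (B 1) (pd b w)) = pd (B 1) (pd (B 2) (pd b w)) from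
    swap3_12 hw (B 2) (B 1) b]
  ring

lemma eqF (hu : ContDiff ℝ (⊤ : ℕ∞) u) (hv : ContDiff ℝ (⊤ : ℕ∞) v) (hw : ContDiff ℝ (⊤ : ℕ∞) w) :
    (∑ p : Pt n, Y3t ω u v w x p.1.1 p.1.2 p.2.1 p.2.2)
      = ∑ p : Pt n, Y5t ω u v w x p.1.1 p.1.2 p.2.1 p.2.2 := by
  rw [← Equiv.sum_comp (s12 (n := n))
    (fun p : Pt n => Y3t ω u v w x p.1.1 p.1.2 p.2.1 p.2.2)]
  refine Finset.sum_congr rfl fun p _ => ?_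
  obtain ⟨⟨A, B⟩, a, b⟩ := p
  show Y3t ω u v w x ![A 0, A 2, A 1] ![B 0, B 2, B 1] a b = Y5t ω u v w x A B a b
  unfold Y3t Y5t pdt w3
  simp only [Matrix.cons_val_zero, Matrix.cons_val_one, Matrix.head_cons,
    Matrix.cons_val_two, Matrix.tail_cons]
  rw [show pd (A 0) (pd (A 2) (pd (A 1) u)) = pd (A 0) (pd (A 1) (pd (A 2) u)) from
    swap3_23 hu (A 0) (A 2) (A 1)]
  ring

lemma eqG (hu : ContDiff ℝ (⊤ : ℕ∞) u) (hv : ContDiff ℝ (⊤ : ℕ∞) v) (hw : ContDiff ℝ (⊤ : ℕ∞) w) :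
    (∑ p : Pt n, Y2t ω u v w x p.1.1 p.1.2 p.2.1 p.2.2)
      = ∑ p : Pt n, Y5t ω u v w x p.1.1 p.1.2 p.2.1 p.2.2 := by
  rw [← Equiv.sum_comp (s02 (n := n))
    (fun p : Pt n => Y2t ω u v w x p.1.1 p.1.2 p.2.1 p.2.2)]
  refine Finset.sum_congr rfl fun p _ => ?_
  obtain ⟨⟨A, B⟩, a, b⟩ := p
  show Y2t ω u v w x ![A 2, A 1, A 0] ![B 2, B 1, B 0] a b = Y5t ω u v w x A B a b
  unfold Y2t Y5t pdt w3
  simp only [Matrix.cons_val_zero, Matrix.cons_val_one, Matrix.head_cons,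
    Matrix.cons_val_two, Matrix.tail_cons]
  rw [show pd (A 2) (pd (A 1) (pd (A 0) u)) = pd (A 0) (pd (A 1) (pd (A 2) u)) from
    rev3 hu (A 2) (A 1) (A 0)]
  rw [show pd (B 1) (pd (B 0) (pd a v)) = pd (B 0) (pd (B 1) (pd a v)) from
    swap3_12 hv (B 1) (B 0) a]
  ring

end Cancel

end Moyal13

/-- the order-ℏ² term of the Jacobiator of the Moyal-type bracket
vanishes; equivalently `C₁ = P₃/3!` is a 2-cocycle of the bosonic Poisson algebra
with coefficients in the adjoint representation. -/
theorem moyal_first_order_cocycle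
    (n : ℕ) (hn : 0 < n) (ω : Matrix (Fin n) (Fin n) ℝ) (hω : ω.transpose = -ω)
    (f g h : (Fin n → ℝ) → ℝ)
    (hf : ContDiff ℝ (⊤ : ℕ∞) f) (hg : ContDiff ℝ (⊤ : ℕ∞) g) (hh : ContDiff ℝ (⊤ : ℕ∞) h) :
    ∀ x,
      Pk ω 1 f (Pk ω 3 g h) x + Pk ω 3 f (Pk ω 1 g h) x
      + Pk ω 1 g (Pk ω 3 h f) x + Pk ω 3 g (Pk ω 1 h f) x
      + Pk ω 1 h (Pk ω 3 f g) x + Pk ω 3 h (Pk ω 1 f g) x = 0 := by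
  intro x
  have hanti : ∀ i j : Fin n, ω j i = -ω i j := by
    intro i j
    have := congrFun (congrFun hω i) j
    simpa [Matrix.transpose_apply] using this
  rw [Moyal13.pieceI ω x hf hg hh, Moyal13.pieceJ ω x hf hg hh,
      Moyal13.pieceI ω x hg hh hf, Moyal13.pieceJ ω x hg hh hf,
      Moyal13.pieceI ω x hh hf hg, Moyal13.pieceJ ω x hh hf hg]
  have cA1 := Moyal13.cancelA ω x hanti hf hg hh
  have cA2 := Moyal13.cancelA ω x hanti hg hh hf
  have cA3 := Moyal13.cancelA ω x hanti hh hf hg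
  have cB1 := Moyal13.cancelB ω x hanti hf hg hh
  have cB2 := Moyal13.cancelB ω x hanti hg hh hf
  have cB3 := Moyal13.cancelB ω x hanti hh hf hg
  have cC1 := Moyal13.cancelC ω x hanti hf hg hh
  have cC2 := Moyal13.cancelC ω x hanti hg hh hf
  have cC3 := Moyal13.cancelC ω x hanti hh hf hg
  have dD1 := Moyal13.eqD ω x hf hg hh
  have dD2 := Moyal13.eqD ω x hg hh hf
  have dD3 := Moyal13.eqD ω x hh hf hg
  have dE1 := Moyal13.eqE ω x hf hg hh
  have dE2 := Moyal13.eqE ω x hg hh hf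
  have dE3 := Moyal13.eqE ω x hh hf hg
  have dF1 := Moyal13.eqF ω x hf hg hh
  have dF2 := Moyal13.eqF ω x hg hh hf
  have dF3 := Moyal13.eqF ω x hh hf hg
  have dG1 := Moyal13.eqG ω x hf hg hh
  have dG2 := Moyal13.eqG ω x hg hh hf
  have dG3 := Moyal13.eqG ω x hh hf hg
  linarith
end
end

section
/- The Moyal-type bracket satisfies the Jacobi identity order by order: for every m ∈ ℕ with m ≥ 1 and all smooth functions f, g, h : ℝ^n → ℝ, Σ_{k+l=m, k,l ≥ 0} 1/((2k+1)!·(2l+1)!) · [ P_{2k+1}(f, P_{2l+1}(g,h)) + P_{2k+1}(g, P_{2l+1}(h,f)) + P_{2k+1}(h, P_{2l+1}(f,g)) ] = 0. -/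
open MeasureTheory Finset

noncomputable section

open Finset
variable {n : ℕ}

abbrev Fn (n : ℕ) := (Fin n → ℝ) → ℝ

/-- single partial derivative -/
def pd (a : Fin n) (f : Fn n) : Fn n := fun x => fderiv ℝ f x (Pi.single a 1)

lemma pd_contDiff {f : Fn n} (hf : ContDiff ℝ (⊤ : ℕ∞) f) (a : Fin n) : ContDiff ℝ (⊤ : ℕ∞) (pd a f) :=
  (hf.fderiv_right (by simp)).clm_apply contDiff_const

/-- iterated partial derivatives, innermost index first -/
def pdI : {k : ℕ} → (Fin k → Fin n) → Fn n → Fn n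
  | 0, _, f => f
  | _+1, A, f => pdI (fun i => A i.succ) (pd (A 0) f)

@[simp] lemma pdI_zero (A : Fin 0 → Fin n) (f : Fn n) : pdI A f = f := rfl

lemma pdI_succ {k : ℕ} (A : Fin (k+1) → Fin n) (f : Fn n) :
    pdI A f = pdI (fun i => A i.succ) (pd (A 0) f) := rfl

lemma pdI_contDiff {f : Fn n} (hf : ContDiff ℝ (⊤ : ℕ∞) f) : ∀ {k : ℕ} (A : Fin k → Fin n),
    ContDiff ℝ (⊤ : ℕ∞) (pdI A f) := by
  intro k
  induction k generalizing f with
  | zero => intro A; exact hf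
  | succ k ih => intro A; exact ih (pd_contDiff hf (A 0)) _

lemma pd_comm {f : Fn n} (hf : ContDiff ℝ (⊤ : ℕ∞) f) (a b : Fin n) :
    pd a (pd b f) = pd b (pd a f) := by
  funext x
  have hsym : ∀ v w, fderiv ℝ (fderiv ℝ f) x v w = fderiv ℝ (fderiv ℝ f) x w v :=
    (hf.contDiffAt).isSymmSndFDerivAt (by rw [minSmoothness_of_isRCLikeNormedField]; exact WithTop.coe_le_coe.mpr le_top)
  unfold pd
  rw [fderiv_clm_apply ((hf.fderiv_right (m := 1) (by exact WithTop.coe_le_coe.mpr le_top)).differentiable one_ne_zero x)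
        (differentiableAt_const _),
      fderiv_clm_apply ((hf.fderiv_right (m := 1) (by exact WithTop.coe_le_coe.mpr le_top)).differentiable one_ne_zero x)
        (differentiableAt_const _)]
  simp [hsym]

lemma pd_pdI_comm {f : Fn n} (hf : ContDiff ℝ (⊤ : ℕ∞) f) : ∀ {k : ℕ} (A : Fin k → Fin n) (a : Fin n),
    pd a (pdI A f) = pdI A (pd a f) := by
  intro k
  induction k generalizing f with
  | zero => intro A a; rfl
  | succ k ih =>
    intro A a
    rw [pdI_succ, ih (pd_contDiff hf _) _ a, pd_comm hf, pdI_succ]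

lemma pdI_snoc {k : ℕ} (A : Fin k → Fin n) (a : Fin n) {f : Fn n} (hf : ContDiff ℝ (⊤ : ℕ∞) f) :
    pdI (Fin.snoc A a) f = pdI A (pd a f) := by
  induction k generalizing f with
  | zero =>
    have h0 : (Fin.snoc A a : Fin 1 → Fin n) 0 = a := by simp [Fin.snoc]
    rw [pdI_succ, h0]
    exact (pdI_zero _ _).trans (pdI_zero _ _).symm
  | succ k ih =>
    rw [pdI_succ]
    have h1 : (fun i : Fin (k+1) => (Fin.snoc A a : Fin (k+2) → Fin n) i.succ)
        = Fin.snoc (fun i : Fin k => A i.succ) a := by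
      funext i
      induction i using Fin.lastCases with
      | last => simp
      | cast j => simp [Fin.succ_castSucc, -Fin.castSucc_succ]
    have h0 : (Fin.snoc A a : Fin (k+2) → Fin n) 0 = A 0 := by
      have : (0 : Fin (k+2)) = Fin.castSucc 0 := rfl
      rw [this, Fin.snoc_castSucc]
    rw [h0, h1, ih _ (pd_contDiff hf (A 0)), pd_comm hf]
    rfl

lemma iteratedFDeriv_pdI : ∀ {k : ℕ} {f : Fn n}, ContDiff ℝ (⊤ : ℕ∞) f → ∀ (A : Fin k → Fin n) (x),
    iteratedFDeriv ℝ k f x (fun i => Pi.single (A i) 1) = pdI A f x := by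
  intro k
  induction k with
  | zero => intro f hf A x; simp [iteratedFDeriv_zero_apply]
  | succ k ih =>
    intro f hf A x
    rw [iteratedFDeriv_succ_apply_right]
    set v : Fin n → ℝ := Pi.single (A (Fin.last k)) 1 with hv
    set G : ((Fin n → ℝ) →L[ℝ] ℝ) →L[ℝ] ℝ := ContinuousLinearMap.apply ℝ ℝ v with hG
    have hcomp := G.iteratedFDeriv_comp_left ((hf.fderiv_right (m := ((⊤ : ℕ∞) : WithTop ℕ∞)) (by simp)).contDiffAt (x := x)) ((by exact_mod_cast le_top) : (k : WithTop ℕ∞) ≤ ((⊤ : ℕ∞) : WithTop ℕ∞))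
    have h1 : Fin.init (fun i : Fin (k+1) => (Pi.single (A i) 1 : Fin n → ℝ))
        = fun i : Fin k => (Pi.single (A i.castSucc) 1 : Fin n → ℝ) := by
      funext i; rfl
    have h2 : iteratedFDeriv ℝ k (fun y => fderiv ℝ f y) x
          (fun i : Fin k => (Pi.single (A i.castSucc) 1 : Fin n → ℝ)) v
        = iteratedFDeriv ℝ k (G ∘ fderiv ℝ f) x
          (fun i : Fin k => (Pi.single (A i.castSucc) 1 : Fin n → ℝ)) := by
      rw [hcomp]; rfl
    rw [h1, h2]
    have h3 : (G ∘ fderiv ℝ f) = pd (A (Fin.last k)) f := rfl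
    rw [h3, ih (pd_contDiff hf _) _ x, ← pdI_snoc _ _ hf]
    congr 1
    exact Fin.snoc_init_self A

lemma sum_pi_succ {k : ℕ} (F : (Fin (k+1) → Fin n) → ℝ) :
    ∑ A : Fin (k+1) → Fin n, F A = ∑ a0 : Fin n, ∑ A : Fin k → Fin n, F (Fin.cons a0 A) := by
  rw [← (Fin.consEquiv (fun _ => Fin n)).sum_comp F, Fintype.sum_prod_type]
  rfl

lemma pd_add {u v : Fn n} (hu : ContDiff ℝ (⊤ : ℕ∞) u) (hv : ContDiff ℝ (⊤ : ℕ∞) v) (a : Fin n) (x) :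
    pd a (fun y => u y + v y) x = pd a u x + pd a v x := by
  unfold pd
  rw [fderiv_fun_add (hu.differentiable (by simp) x) (hv.differentiable (by simp) x)]
  rfl

lemma pdI_add {u v : Fn n} (hu : ContDiff ℝ (⊤ : ℕ∞) u) (hv : ContDiff ℝ (⊤ : ℕ∞) v) :
    ∀ {k : ℕ} (A : Fin k → Fin n) (x),
    pdI A (fun y => u y + v y) x = pdI A u x + pdI A v x := by
  intro k
  induction k generalizing u v with
  | zero => intro A x; rfl
  | succ k ih =>
    intro A x
    rw [pdI_succ]
    have : pd (A 0) (fun y => u y + v y) = fun y => pd (A 0) u y + pd (A 0) v y := by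
      funext y; exact pd_add hu hv _ y
    rw [this]
    exact ih (pd_contDiff hu _) (pd_contDiff hv _) _ x

lemma pd_sum {ι : Type*} (s : Finset ι) (F : ι → Fn n) (hF : ∀ j ∈ s, ContDiff ℝ (⊤ : ℕ∞) (F j))
    (a : Fin n) (x) :
    pd a (fun y => ∑ j ∈ s, F j y) x = ∑ j ∈ s, pd a (F j) x := by
  unfold pd
  rw [fderiv_fun_sum (fun j hj => (hF j hj).differentiable (by simp) x)]
  simp

lemma pd_mul {u v : Fn n} (hu : ContDiff ℝ (⊤ : ℕ∞) u) (hv : ContDiff ℝ (⊤ : ℕ∞) v) (a : Fin n) (x) :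
    pd a (fun y => u y * v y) x = pd a u x * v x + u x * pd a v x := by
  unfold pd
  rw [fderiv_fun_mul (hu.differentiable (by simp) x) (hv.differentiable (by simp) x)]
  simp [mul_comm]
  ring

lemma pd_const_mul {u : Fn n} (hu : ContDiff ℝ (⊤ : ℕ∞) u) (c : ℝ) (a : Fin n) (x) :
    pd a (fun y => c * u y) x = c * pd a u x := by
  unfold pd
  rw [fderiv_const_mul (hu.differentiable (by simp) x)]
  rfl

/-- Pk in pdI form -/
def Pkd (ω : Matrix (Fin n) (Fin n) ℝ) (k : ℕ) (f g : Fn n) : Fn n :=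
  fun x => ∑ A : Fin k → Fin n, ∑ B : Fin k → Fin n,
    (∏ i, ω (A i) (B i)) * (pdI A f x * pdI B g x)

variable (ω : Matrix (Fin n) (Fin n) ℝ)

lemma Pkd_contDiff {k : ℕ} {f g : Fn n} (hf : ContDiff ℝ (⊤ : ℕ∞) f) (hg : ContDiff ℝ (⊤ : ℕ∞) g) :
    ContDiff ℝ (⊤ : ℕ∞) (Pkd ω k f g) := by
  apply ContDiff.sum (fun A _ => ContDiff.sum (fun B _ => ?_))
  exact contDiff_const.mul ((pdI_contDiff hf A).mul (pdI_contDiff hg B))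

lemma Pk_eq_Pkd {k : ℕ} {f g : Fn n} (hf : ContDiff ℝ (⊤ : ℕ∞) f) (hg : ContDiff ℝ (⊤ : ℕ∞) g) :
    Pk ω k f g = Pkd ω k f g := by
  funext x
  unfold Pk Pkd
  refine Finset.sum_congr rfl (fun A _ => Finset.sum_congr rfl (fun B _ => ?_))
  rw [iteratedFDeriv_pdI hf, iteratedFDeriv_pdI hg, mul_assoc]

/-- Leibniz rule for Pkd in both arguments simultaneously isn't needed; this is
    `∂ₐ (Pkd k g h) = Pkd k (∂ₐ g) h + Pkd k g (∂ₐ h)`. -/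
lemma pd_Pkd {k : ℕ} {g h : Fn n} (hg : ContDiff ℝ (⊤ : ℕ∞) g) (hh : ContDiff ℝ (⊤ : ℕ∞) h)
    (a : Fin n) (x) :
    pd a (Pkd ω k g h) x = Pkd ω k (pd a g) h x + Pkd ω k g (pd a h) x := by
  unfold Pkd
  rw [pd_sum _ _ (fun A _ => ContDiff.sum fun B _ =>
      contDiff_const.mul ((pdI_contDiff hg A).mul (pdI_contDiff hh B))) a x]
  rw [← Finset.sum_add_distrib]
  refine Finset.sum_congr rfl (fun A _ => ?_)
  rw [pd_sum _ _ (fun B _ =>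
      contDiff_const.mul ((pdI_contDiff hg A).mul (pdI_contDiff hh B))) a x]
  rw [← Finset.sum_add_distrib]
  refine Finset.sum_congr rfl (fun B _ => ?_)
  have e1 : pd a (fun y => (∏ i, ω (A i) (B i)) * (pdI A g y * pdI B h y)) x
      = (∏ i, ω (A i) (B i)) * pd a (fun y => pdI A g y * pdI B h y) x := by
    have := pd_const_mul (u := fun y => pdI A g y * pdI B h y)
      ((pdI_contDiff hg A).mul (pdI_contDiff hh B)) (∏ i, ω (A i) (B i)) a x
    simpa using this
  rw [e1, pd_mul (pdI_contDiff hg A) (pdI_contDiff hh B),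
      pd_pdI_comm hg, pd_pdI_comm hh, mul_add]

/-- The trilinear contraction operator. -/
def Qd (ω : Matrix (Fin n) (Fin n) ℝ) (p q r : ℕ) (f g h : Fn n) : Fn n := fun x =>
  ∑ a1 : Fin p → Fin n, ∑ b1 : Fin p → Fin n,
  ∑ c1 : Fin q → Fin n, ∑ d1 : Fin q → Fin n,
  ∑ e1 : Fin r → Fin n, ∑ f1 : Fin r → Fin n,
    ((∏ i, ω (a1 i) (b1 i)) * (∏ i, ω (c1 i) (d1 i)) * (∏ i, ω (e1 i) (f1 i))) *
      (pdI f1 (pdI a1 f) x * pdI b1 (pdI c1 g) x * pdI d1 (pdI e1 h) x)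

abbrev TT (n p q r : ℕ) :=
  ((Fin p → Fin n) × (Fin p → Fin n)) ×
  (((Fin q → Fin n) × (Fin q → Fin n)) × ((Fin r → Fin n) × (Fin r → Fin n)))

def QB (ω : Matrix (Fin n) (Fin n) ℝ) (p q r : ℕ) (f g h : Fn n) (x : Fin n → ℝ)
    (z : TT n p q r) : ℝ :=
  ((∏ i, ω (z.1.1 i) (z.1.2 i)) * (∏ i, ω (z.2.1.1 i) (z.2.1.2 i))
      * (∏ i, ω (z.2.2.1 i) (z.2.2.2 i))) *
    (pdI z.2.2.2 (pdI z.1.1 f) x * pdI z.1.2 (pdI z.2.1.1 g) x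
      * pdI z.2.1.2 (pdI z.2.2.1 h) x)

lemma Qd_pack (p q r : ℕ) (f g h : Fn n) (x) :
    Qd ω p q r f g h x = ∑ z : TT n p q r, QB ω p q r f g h x z := by
  unfold Qd QB
  simp only [Fintype.sum_prod_type]

lemma Qd_cyclic (p q r : ℕ) (f g h : Fn n) (x) :
    Qd ω p q r f g h x = Qd ω q r p g h f x := by
  rw [Qd_pack, Qd_pack]
  refine (Fintype.sum_equiv
    (⟨fun w => (w.2.2, (w.1, w.2.1)), fun z => (z.2.1, (z.2.2, z.1)),
      fun _ => rfl, fun _ => rfl⟩ : TT n q r p ≃ TT n p q r)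
    (QB ω q r p g h f x) (QB ω p q r f g h x) (fun w => ?_)).symm
  unfold QB
  dsimp
  ring

lemma pdI_cons {k : ℕ} (a0 : Fin n) (A : Fin k → Fin n) (f : Fn n) :
    pdI (Fin.cons a0 A) f = pdI A (pd a0 f) := by
  rw [pdI_succ]
  have h1 : (fun i : Fin k => (Fin.cons a0 A : Fin (k+1) → Fin n) i.succ) = A := by
    funext i; simp
  have h2 : (Fin.cons a0 A : Fin (k+1) → Fin n) 0 = a0 := by simp
  rw [h1, h2]

lemma prod_cons_split {p : ℕ} (a0 b0 : Fin n) (a b : Fin p → Fin n) :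
    (∏ i : Fin (p+1), ω ((Fin.cons a0 a : Fin (p+1) → Fin n) i)
        ((Fin.cons b0 b : Fin (p+1) → Fin n) i))
      = ω a0 b0 * ∏ i : Fin p, ω (a i) (b i) := by
  rw [Fin.prod_univ_succ]
  simp

lemma sum_pack2 {γ : Type*} [Fintype γ] (F : Fin n → Fin n → γ → ℝ) :
    ∑ u : (Fin n × Fin n) × γ, F u.1.1 u.1.2 u.2
      = ∑ a0 : Fin n, ∑ b0 : Fin n, ∑ z : γ, F a0 b0 z := by
  rw [Fintype.sum_prod_type, Fintype.sum_prod_type]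

/-- equiv used to absorb one f-g contraction -/
def EFG (n p q r : ℕ) : ((Fin n × Fin n) × TT n p q r) ≃ TT n (p+1) q r :=
  (⟨fun u => (((u.1.1, u.2.1.1), (u.1.2, u.2.1.2)), u.2.2),
    fun v => ((v.1.1.1, v.1.2.1), ((v.1.1.2, v.1.2.2), v.2)),
    fun _ => rfl, fun _ => rfl⟩ :
      ((Fin n × Fin n) × TT n p q r) ≃
        ((Fin n × (Fin p → Fin n)) × (Fin n × (Fin p → Fin n))) ×
          (((Fin q → Fin n) × (Fin q → Fin n)) × ((Fin r → Fin n) × (Fin r → Fin n)))).trans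
  (Equiv.prodCongr
    (Equiv.prodCongr (Fin.consEquiv (fun _ => Fin n)) (Fin.consEquiv (fun _ => Fin n)))
    (Equiv.refl _))

/-- equiv used to absorb one h-f contraction -/
def EHF (n p q r : ℕ) : ((Fin n × Fin n) × TT n p q r) ≃ TT n p q (r+1) :=
  (⟨fun u => (u.2.1, (u.2.2.1, ((u.1.2, u.2.2.2.1), (u.1.1, u.2.2.2.2)))),
    fun v => ((v.2.2.2.1, v.2.2.1.1), (v.1, (v.2.1, (v.2.2.1.2, v.2.2.2.2)))),
    fun _ => rfl, fun _ => rfl⟩ :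
      ((Fin n × Fin n) × TT n p q r) ≃
        ((Fin p → Fin n) × (Fin p → Fin n)) ×
          (((Fin q → Fin n) × (Fin q → Fin n)) ×
            ((Fin n × (Fin r → Fin n)) × (Fin n × (Fin r → Fin n))))).trans
  (Equiv.prodCongr (Equiv.refl _)
    (Equiv.prodCongr (Equiv.refl _)
      (Equiv.prodCongr (Fin.consEquiv (fun _ => Fin n)) (Fin.consEquiv (fun _ => Fin n)))))

lemma absorb_fg {p q r : ℕ} {f g h : Fn n} (hg : ContDiff ℝ (⊤ : ℕ∞) g) (x) :
    ∑ a0 : Fin n, ∑ b0 : Fin n, ω a0 b0 * Qd ω p q r (pd a0 f) (pd b0 g) h x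
      = Qd ω (p+1) q r f g h x := by
  calc ∑ a0 : Fin n, ∑ b0 : Fin n, ω a0 b0 * Qd ω p q r (pd a0 f) (pd b0 g) h x
      = ∑ a0 : Fin n, ∑ b0 : Fin n, ∑ z : TT n p q r,
          ω a0 b0 * QB ω p q r (pd a0 f) (pd b0 g) h x z := by
        refine Finset.sum_congr rfl fun a0 _ => Finset.sum_congr rfl fun b0 _ => ?_
        rw [Qd_pack, Finset.mul_sum]
    _ = ∑ u : (Fin n × Fin n) × TT n p q r,
          ω u.1.1 u.1.2 * QB ω p q r (pd u.1.1 f) (pd u.1.2 g) h x u.2 :=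
        (sum_pack2 _).symm
    _ = ∑ z : TT n (p+1) q r, QB ω (p+1) q r f g h x z := by
        refine Fintype.sum_equiv (EFG n p q r) _ _ (fun u => ?_)
        obtain ⟨⟨a0, b0⟩, ⟨⟨a, b⟩, ⟨⟨c, d⟩, ⟨e, e2⟩⟩⟩⟩ := u
        show ω a0 b0 * QB ω p q r (pd a0 f) (pd b0 g) h x ((a,b),((c,d),(e,e2)))
          = QB ω (p+1) q r f g h x ((Fin.cons a0 a, Fin.cons b0 b),((c,d),(e,e2)))
        unfold QB
        dsimp only
        rw [prod_cons_split, pdI_cons a0 a f, pdI_cons b0 b (pdI c g),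
            ← pd_pdI_comm hg]
        ring
    _ = Qd ω (p+1) q r f g h x := (Qd_pack ω (p+1) q r f g h x).symm

lemma absorb_hf {p q r : ℕ} {f g h : Fn n} (hω : ω.transpose = -ω)
    (hf : ContDiff ℝ (⊤ : ℕ∞) f) (x) :
    ∑ a0 : Fin n, ∑ b0 : Fin n, ω a0 b0 * Qd ω p q r (pd a0 f) g (pd b0 h) x
      = - Qd ω p q (r+1) f g h x := by
  have hasym : ∀ i j : Fin n, ω i j = - ω j i := by
    intro i j
    have h1 : ω.transpose j i = (-ω) j i := by rw [hω]
    simpa [Matrix.transpose_apply] using h1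
  calc ∑ a0 : Fin n, ∑ b0 : Fin n, ω a0 b0 * Qd ω p q r (pd a0 f) g (pd b0 h) x
      = ∑ a0 : Fin n, ∑ b0 : Fin n, ∑ z : TT n p q r,
          - (ω b0 a0 * QB ω p q r (pd a0 f) g (pd b0 h) x z) := by
        refine Finset.sum_congr rfl fun a0 _ => Finset.sum_congr rfl fun b0 _ => ?_
        rw [Qd_pack, Finset.mul_sum]
        refine Finset.sum_congr rfl fun z _ => ?_
        rw [hasym a0 b0]; ring
    _ = - ∑ a0 : Fin n, ∑ b0 : Fin n, ∑ z : TT n p q r,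
          ω b0 a0 * QB ω p q r (pd a0 f) g (pd b0 h) x z := by
        simp [Finset.sum_neg_distrib]
    _ = - ∑ u : (Fin n × Fin n) × TT n p q r,
          ω u.1.2 u.1.1 * QB ω p q r (pd u.1.1 f) g (pd u.1.2 h) x u.2 := by
        rw [sum_pack2 (fun a0 b0 z => ω b0 a0 * QB ω p q r (pd a0 f) g (pd b0 h) x z)]
    _ = - ∑ z : TT n p q (r+1), QB ω p q (r+1) f g h x z := by
        congr 1
        refine Fintype.sum_equiv (EHF n p q r) _ _ (fun u => ?_)
        obtain ⟨⟨a0, b0⟩, ⟨⟨a, b⟩, ⟨⟨c, d⟩, ⟨e, e2⟩⟩⟩⟩ := u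
        show ω b0 a0 * QB ω p q r (pd a0 f) g (pd b0 h) x ((a,b),((c,d),(e,e2)))
          = QB ω p q (r+1) f g h x ((a,b),((c,d),(Fin.cons b0 e, Fin.cons a0 e2)))
        unfold QB
        dsimp only
        rw [prod_cons_split, pdI_cons a0 e2 (pdI a f), pdI_cons b0 e h,
            ← pd_pdI_comm hf]
        ring
    _ = - Qd ω p q (r+1) f g h x := by rw [← Qd_pack]

lemma Pkd_add_right {k : ℕ} (f : Fn n) {u v : Fn n}
    (hu : ContDiff ℝ (⊤ : ℕ∞) u) (hv : ContDiff ℝ (⊤ : ℕ∞) v) (x) :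
    Pkd ω k f (fun y => u y + v y) x = Pkd ω k f u x + Pkd ω k f v x := by
  unfold Pkd
  rw [← Finset.sum_add_distrib]
  refine Finset.sum_congr rfl fun A _ => ?_
  rw [← Finset.sum_add_distrib]
  refine Finset.sum_congr rfl fun B _ => ?_
  rw [pdI_add hu hv]
  ring

lemma sum_pi_succ_pair {k : ℕ} (F : (Fin (k+1) → Fin n) → (Fin (k+1) → Fin n) → ℝ) :
    (∑ A : Fin (k+1) → Fin n, ∑ B : Fin (k+1) → Fin n, F A B)
    = ∑ a0 : Fin n, ∑ b0 : Fin n, ∑ A : Fin k → Fin n, ∑ B : Fin k → Fin n,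
        F (Fin.cons a0 A) (Fin.cons b0 B) := by
  rw [sum_pi_succ]
  refine Finset.sum_congr rfl fun a0 _ => ?_
  have h1 : ∀ A : Fin k → Fin n, (∑ B : Fin (k+1) → Fin n, F (Fin.cons a0 A) B)
      = ∑ b0 : Fin n, ∑ B : Fin k → Fin n, F (Fin.cons a0 A) (Fin.cons b0 B) :=
    fun A => sum_pi_succ _
  simp_rw [h1]
  exact Finset.sum_comm

lemma Pkd_succ_split {a : ℕ} (f G : Fn n) (x) :
    Pkd ω (a+1) f G x
      = ∑ a0 : Fin n, ∑ b0 : Fin n, ω a0 b0 * Pkd ω a (pd a0 f) (pd b0 G) x := by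
  unfold Pkd
  rw [sum_pi_succ_pair]
  refine Finset.sum_congr rfl fun a0 _ => Finset.sum_congr rfl fun b0 _ => ?_
  rw [Finset.mul_sum]
  refine Finset.sum_congr rfl fun A _ => ?_
  rw [Finset.mul_sum]
  refine Finset.sum_congr rfl fun B _ => ?_
  rw [prod_cons_split, pdI_cons, pdI_cons]
  ring

lemma sum_swap_fin2_range {M : Type*} [AddCommMonoid M] (s : Finset ℕ)
    (U : Fin n → Fin n → ℕ → M) :
    ∑ a0 : Fin n, ∑ b0 : Fin n, ∑ p ∈ s, U a0 b0 p
      = ∑ p ∈ s, ∑ a0 : Fin n, ∑ b0 : Fin n, U a0 b0 p :=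
  (Finset.sum_congr rfl fun _ _ => Finset.sum_comm).trans Finset.sum_comm

lemma expand (hω : ω.transpose = -ω) (b : ℕ) : ∀ (a : ℕ) (f g h : Fn n),
    ContDiff ℝ (⊤ : ℕ∞) f → ContDiff ℝ (⊤ : ℕ∞) g → ContDiff ℝ (⊤ : ℕ∞) h → ∀ x,
    Pkd ω a f (Pkd ω b g h) x
      = ∑ p ∈ Finset.range (a+1),
          ((a.choose p : ℝ) * (-1 : ℝ)^(a-p)) * Qd ω p b (a-p) f g h x := by
  intro a
  induction a with
  | zero =>
    intro f g h hf hg hh x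
    rw [Finset.sum_range_one]
    simp only [Nat.choose_self, Nat.cast_one, pow_zero, Nat.sub_zero, one_mul]
    unfold Pkd Qd
    simp only [Fintype.sum_unique, pdI_zero, Finset.univ_unique, Finset.sum_singleton]
    simp only [Finset.univ_eq_empty, Finset.prod_empty, one_mul, mul_one]
    rw [Finset.mul_sum]
    refine Finset.sum_congr rfl fun A _ => ?_
    rw [Finset.mul_sum]
    exact Finset.sum_congr rfl fun B _ => by ring
  | succ a ih =>
    intro f g h hf hg hh x
    rw [Pkd_succ_split]
    have hsplit : ∀ a0 b0 : Fin n, ω a0 b0 * Pkd ω a (pd a0 f) (pd b0 (Pkd ω b g h)) x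
        = ∑ p ∈ Finset.range (a+1), ((a.choose p : ℝ) * (-1:ℝ)^(a-p)) *
            (ω a0 b0 * Qd ω p b (a-p) (pd a0 f) (pd b0 g) h x
              + ω a0 b0 * Qd ω p b (a-p) (pd a0 f) g (pd b0 h) x) := by
      intro a0 b0
      have e1 : pd b0 (Pkd ω b g h) = fun y => Pkd ω b (pd b0 g) h y + Pkd ω b g (pd b0 h) y :=
        funext fun y => pd_Pkd ω hg hh b0 y
      rw [e1, Pkd_add_right ω _ (Pkd_contDiff ω (pd_contDiff hg _) hh)
            (Pkd_contDiff ω hg (pd_contDiff hh _)) x,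
          ih (pd a0 f) (pd b0 g) h (pd_contDiff hf _) (pd_contDiff hg _) hh x,
          ih (pd a0 f) g (pd b0 h) (pd_contDiff hf _) hg (pd_contDiff hh _) x,
          mul_add, Finset.mul_sum, Finset.mul_sum, ← Finset.sum_add_distrib]
      exact Finset.sum_congr rfl fun p _ => by ring
    simp_rw [hsplit]
    rw [sum_swap_fin2_range]
    have habs : ∀ p ∈ Finset.range (a+1),
        (∑ a0 : Fin n, ∑ b0 : Fin n, ((a.choose p : ℝ) * (-1:ℝ)^(a-p)) *
            (ω a0 b0 * Qd ω p b (a-p) (pd a0 f) (pd b0 g) h x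
              + ω a0 b0 * Qd ω p b (a-p) (pd a0 f) g (pd b0 h) x))
          = ((a.choose p : ℝ) * (-1:ℝ)^(a-p)) * Qd ω (p+1) b (a-p) f g h x
            + ((a.choose p : ℝ) * (-1:ℝ)^((a-p)+1)) * Qd ω p b ((a-p)+1) f g h x := by
      intro p _
      have e2 : ∀ a0 : Fin n, (∑ b0 : Fin n, ((a.choose p : ℝ) * (-1:ℝ)^(a-p)) *
            (ω a0 b0 * Qd ω p b (a-p) (pd a0 f) (pd b0 g) h x
              + ω a0 b0 * Qd ω p b (a-p) (pd a0 f) g (pd b0 h) x))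
          = ((a.choose p : ℝ) * (-1:ℝ)^(a-p)) *
              ((∑ b0 : Fin n, ω a0 b0 * Qd ω p b (a-p) (pd a0 f) (pd b0 g) h x)
              + (∑ b0 : Fin n, ω a0 b0 * Qd ω p b (a-p) (pd a0 f) g (pd b0 h) x)) := by
        intro a0
        rw [mul_add, Finset.mul_sum, Finset.mul_sum, ← Finset.sum_add_distrib]
        exact Finset.sum_congr rfl fun b0 _ => by ring
      simp_rw [e2]
      rw [← Finset.mul_sum, Finset.sum_add_distrib, absorb_fg ω hg x, absorb_hf ω hω hf x,
          pow_succ]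
      ring
    rw [Finset.sum_congr rfl habs, Finset.sum_add_distrib]
    -- coefficient bookkeeping
    have hYconv : ∀ p ∈ Finset.range (a+1),
        ((a.choose p : ℝ) * (-1:ℝ)^((a-p)+1)) * Qd ω p b ((a-p)+1) f g h x
          = ((a.choose p : ℝ) * (-1:ℝ)^(a+1-p)) * Qd ω p b (a+1-p) f g h x := by
      intro p hp
      have : (a-p)+1 = a+1-p := by
        have := Finset.mem_range.mp hp; omega
      rw [this]
    rw [Finset.sum_congr rfl hYconv]
    have hv : ∑ p ∈ Finset.range (a+2),
          ((a.choose p : ℝ) * (-1:ℝ)^(a+1-p)) * Qd ω p b (a+1-p) f g h x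
        = ∑ p ∈ Finset.range (a+1),
          ((a.choose p : ℝ) * (-1:ℝ)^(a+1-p)) * Qd ω p b (a+1-p) f g h x := by
      rw [Finset.sum_range_succ]
      simp [Nat.choose_eq_zero_of_lt]
    rw [← hv, Finset.sum_range_succ' (fun p => ((a+1).choose p : ℝ) * (-1:ℝ)^(a+1-p)
          * Qd ω p b (a+1-p) f g h x),
        Finset.sum_range_succ' (fun p => ((a.choose p : ℝ) * (-1:ℝ)^(a+1-p))
          * Qd ω p b (a+1-p) f g h x)]
    have hPascal : ∀ p ∈ Finset.range (a+1),
        (((a+1).choose (p+1) : ℝ)) * (-1:ℝ)^(a+1-(p+1)) * Qd ω (p+1) b (a+1-(p+1)) f g h x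
          = ((a.choose p : ℝ) * (-1:ℝ)^(a-p)) * Qd ω (p+1) b (a-p) f g h x
            + ((a.choose (p+1) : ℝ) * (-1:ℝ)^(a+1-(p+1))) * Qd ω (p+1) b (a+1-(p+1)) f g h x := by
      intro p _
      have e3 : a+1-(p+1) = a-p := by omega
      rw [e3, Nat.choose_succ_succ, Nat.cast_add]
      ring
    rw [Finset.sum_congr rfl hPascal, Finset.sum_add_distrib]
    simp only [Nat.choose_zero_right, Nat.cast_one, Nat.sub_zero]
    ring

lemma fact_coef (a p b : ℕ) (hp : p ≤ a) :
    ((a.factorial : ℝ) * (b.factorial : ℝ))⁻¹ * (a.choose p : ℝ)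
      = ((p.factorial : ℝ) * (b.factorial : ℝ) * ((a-p).factorial : ℝ))⁻¹ := by
  have h1 : (a.factorial : ℝ) = (a.choose p : ℝ) * (p.factorial : ℝ) * ((a-p).factorial : ℝ) := by
    exact_mod_cast (Nat.choose_mul_factorial_mul_factorial hp).symm
  have nz1 : (p.factorial : ℝ) ≠ 0 := Nat.cast_ne_zero.mpr (Nat.factorial_ne_zero _)
  have nz2 : (b.factorial : ℝ) ≠ 0 := Nat.cast_ne_zero.mpr (Nat.factorial_ne_zero _)
  have nz3 : ((a-p).factorial : ℝ) ≠ 0 := Nat.cast_ne_zero.mpr (Nat.factorial_ne_zero _)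
  have nz4 : (a.choose p : ℝ) ≠ 0 := Nat.cast_ne_zero.mpr (Nat.choose_pos hp).ne'
  rw [h1]
  field_simp


/-- the Moyal-type bracket satisfies the Jacobi identity order by
order: for every `m ≥ 1`, the coefficient of `(ℏκ)^{2m}` in its Jacobiator
vanishes. -/
theorem moyal_jacobi_order_by_order
    (n : ℕ) (hn : 0 < n) (ω : Matrix (Fin n) (Fin n) ℝ) (hω : ω.transpose = -ω)
    (m : ℕ) (hm : 1 ≤ m)
    (f g h : (Fin n → ℝ) → ℝ)
    (hf : ContDiff ℝ (⊤ : ℕ∞) f) (hg : ContDiff ℝ (⊤ : ℕ∞) g) (hh : ContDiff ℝ (⊤ : ℕ∞) h) :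
    ∀ x,
      ∑ k ∈ Finset.range (m + 1),
        (((2 * k + 1).factorial : ℝ) * ((2 * (m - k) + 1).factorial : ℝ))⁻¹
          * (Pk ω (2 * k + 1) f (Pk ω (2 * (m - k) + 1) g h) x
            + Pk ω (2 * k + 1) g (Pk ω (2 * (m - k) + 1) h f) x
            + Pk ω (2 * k + 1) h (Pk ω (2 * (m - k) + 1) f g) x) = 0 := by
  intro x
  have hterm : ∀ k ∈ Finset.range (m + 1),
      (((2 * k + 1).factorial : ℝ) * ((2 * (m - k) + 1).factorial : ℝ))⁻¹
          * (Pk ω (2 * k + 1) f (Pk ω (2 * (m - k) + 1) g h) x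
            + Pk ω (2 * k + 1) g (Pk ω (2 * (m - k) + 1) h f) x
            + Pk ω (2 * k + 1) h (Pk ω (2 * (m - k) + 1) f g) x)
      = ((∑ p ∈ Finset.range (2*k+2),
            (((2*k+1).factorial : ℝ) * ((2*(m-k)+1).factorial : ℝ))⁻¹
              * (((2*k+1).choose p : ℝ) * (-1:ℝ)^(2*k+1-p))
              * Qd ω p (2*(m-k)+1) (2*k+1-p) f g h x)
        + (∑ p ∈ Finset.range (2*k+2),
            (((2*k+1).factorial : ℝ) * ((2*(m-k)+1).factorial : ℝ))⁻¹
              * (((2*k+1).choose p : ℝ) * (-1:ℝ)^(2*k+1-p))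
              * Qd ω (2*k+1-p) p (2*(m-k)+1) f g h x)
        + (∑ p ∈ Finset.range (2*k+2),
            (((2*k+1).factorial : ℝ) * ((2*(m-k)+1).factorial : ℝ))⁻¹
              * (((2*k+1).choose p : ℝ) * (-1:ℝ)^(2*k+1-p))
              * Qd ω (2*(m-k)+1) (2*k+1-p) p f g h x)) := by
    intro k _
    rw [Pk_eq_Pkd ω hg hh, Pk_eq_Pkd ω hf (Pkd_contDiff ω hg hh),
        Pk_eq_Pkd ω hh hf, Pk_eq_Pkd ω hg (Pkd_contDiff ω hh hf),
        Pk_eq_Pkd ω hf hg, Pk_eq_Pkd ω hh (Pkd_contDiff ω hf hg),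
        expand ω hω (2*(m-k)+1) (2*k+1) f g h hf hg hh x,
        expand ω hω (2*(m-k)+1) (2*k+1) g h f hg hh hf x,
        expand ω hω (2*(m-k)+1) (2*k+1) h f g hh hf hg x,
        mul_add, mul_add, Finset.mul_sum, Finset.mul_sum, Finset.mul_sum]
    congr 1
    · congr 1
      · exact Finset.sum_congr rfl fun p _ => by ring
      · refine Finset.sum_congr rfl fun p _ => ?_
        rw [Qd_cyclic ω p (2*(m-k)+1) (2*k+1-p) g h f x,
            Qd_cyclic ω (2*(m-k)+1) (2*k+1-p) p h f g x]
        ring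
    · refine Finset.sum_congr rfl fun p _ => ?_
      rw [Qd_cyclic ω p (2*(m-k)+1) (2*k+1-p) h f g x]
      ring
  rw [Finset.sum_congr rfl hterm, Finset.sum_add_distrib, Finset.sum_add_distrib]
  have Rf : (∑ k ∈ Finset.range (m+1), ∑ p ∈ Finset.range (2*k+2),
        (((2*k+1).factorial : ℝ) * ((2*(m-k)+1).factorial : ℝ))⁻¹
          * (((2*k+1).choose p : ℝ) * (-1:ℝ)^(2*k+1-p))
          * Qd ω p (2*(m-k)+1) (2*k+1-p) f g h x)
      = ∑ u ∈ Finset.range (2*m+3) ×ˢ Finset.range (2*m+3),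
          (if u.2 % 2 = 1 ∧ u.1 + u.2 ≤ 2*m+2 then
            (-1:ℝ)^(2*m+2-u.1-u.2)
              * ((u.1.factorial : ℝ) * (u.2.factorial : ℝ)
                  * ((2*m+2-u.1-u.2).factorial : ℝ))⁻¹
              * Qd ω u.1 u.2 (2*m+2-u.1-u.2) f g h x
          else 0) := by
    rw [Finset.sum_sigma' (Finset.range (m+1)) (fun k => Finset.range (2*k+2)),
        ← Finset.sum_filter]
    refine Finset.sum_nbij' (fun z => (z.2, 2*(m-z.1)+1)) (fun u => ⟨m - (u.2-1)/2, u.1⟩)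
      ?_ ?_ ?_ ?_ ?_
    · rintro ⟨k, p⟩ hz
      simp only [Finset.mem_sigma, Finset.mem_range] at hz
      simp only [Finset.mem_filter, Finset.mem_product, Finset.mem_range]
      omega
    · rintro ⟨p, q⟩ hu
      simp only [Finset.mem_filter, Finset.mem_product, Finset.mem_range] at hu
      simp only [Finset.mem_sigma, Finset.mem_range]
      omega
    · rintro ⟨k, p⟩ hz
      simp only [Finset.mem_sigma, Finset.mem_range] at hz
      obtain ⟨hk, hp⟩ := hz
      have e : m - (2*(m-k)+1-1)/2 = k := by omega
      simp only [e]
    · rintro ⟨p, q⟩ hu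
      simp only [Finset.mem_filter, Finset.mem_product, Finset.mem_range] at hu
      have e : 2*(m - (m - (q-1)/2))+1 = q := by omega
      simp only [e]
    · rintro ⟨k, p⟩ hz
      simp only [Finset.mem_sigma, Finset.mem_range] at hz
      obtain ⟨hk, hp⟩ := hz
      dsimp only
      have e1 : 2*m+2-p-(2*(m-k)+1) = 2*k+1-p := by omega
      rw [e1]
      have hco := fact_coef (2*k+1) p (2*(m-k)+1) (by omega)
      linear_combination ((-1:ℝ)^(2*k+1-p) * Qd ω p (2*(m-k)+1) (2*k+1-p) f g h x) * hco
  have Rg : (∑ k ∈ Finset.range (m+1), ∑ p ∈ Finset.range (2*k+2),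
        (((2*k+1).factorial : ℝ) * ((2*(m-k)+1).factorial : ℝ))⁻¹
          * (((2*k+1).choose p : ℝ) * (-1:ℝ)^(2*k+1-p))
          * Qd ω (2*k+1-p) p (2*(m-k)+1) f g h x)
      = ∑ u ∈ Finset.range (2*m+3) ×ˢ Finset.range (2*m+3),
          (if (2*m+2-u.1-u.2) % 2 = 1 ∧ u.1 + u.2 ≤ 2*m+2 then
            (-1:ℝ)^u.1
              * ((u.1.factorial : ℝ) * (u.2.factorial : ℝ)
                  * ((2*m+2-u.1-u.2).factorial : ℝ))⁻¹
              * Qd ω u.1 u.2 (2*m+2-u.1-u.2) f g h x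
          else 0) := by
    rw [Finset.sum_sigma' (Finset.range (m+1)) (fun k => Finset.range (2*k+2)),
        ← Finset.sum_filter]
    refine Finset.sum_nbij' (fun z => (2*z.1+1-z.2, z.2)) (fun u => ⟨(u.1+u.2-1)/2, u.2⟩)
      ?_ ?_ ?_ ?_ ?_
    · rintro ⟨k, p⟩ hz
      simp only [Finset.mem_sigma, Finset.mem_range] at hz
      simp only [Finset.mem_filter, Finset.mem_product, Finset.mem_range]
      omega
    · rintro ⟨p, q⟩ hu
      simp only [Finset.mem_filter, Finset.mem_product, Finset.mem_range] at hu
      simp only [Finset.mem_sigma, Finset.mem_range]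
      omega
    · rintro ⟨k, p⟩ hz
      simp only [Finset.mem_sigma, Finset.mem_range] at hz
      obtain ⟨hk, hp⟩ := hz
      have e : (2*k+1-p+p-1)/2 = k := by omega
      simp only [e]
    · rintro ⟨p, q⟩ hu
      simp only [Finset.mem_filter, Finset.mem_product, Finset.mem_range] at hu
      have e : 2*((p+q-1)/2)+1-q = p := by omega
      simp only [e]
    · rintro ⟨k, p⟩ hz
      simp only [Finset.mem_sigma, Finset.mem_range] at hz
      obtain ⟨hk, hp⟩ := hz
      dsimp only
      have e1 : 2*m+2-(2*k+1-p)-p = 2*(m-k)+1 := by omega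
      rw [e1]
      have e2 : (-1:ℝ)^(2*k+1-p) = (-1:ℝ)^(2*k+1-p) := rfl
      have hco := fact_coef (2*k+1) p (2*(m-k)+1) (by omega)
      linear_combination ((-1:ℝ)^(2*k+1-p) * Qd ω (2*k+1-p) p (2*(m-k)+1) f g h x) * hco
  have Rh : (∑ k ∈ Finset.range (m+1), ∑ p ∈ Finset.range (2*k+2),
        (((2*k+1).factorial : ℝ) * ((2*(m-k)+1).factorial : ℝ))⁻¹
          * (((2*k+1).choose p : ℝ) * (-1:ℝ)^(2*k+1-p))
          * Qd ω (2*(m-k)+1) (2*k+1-p) p f g h x)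
      = ∑ u ∈ Finset.range (2*m+3) ×ˢ Finset.range (2*m+3),
          (if u.1 % 2 = 1 ∧ u.1 + u.2 ≤ 2*m+2 then
            (-1:ℝ)^u.2
              * ((u.1.factorial : ℝ) * (u.2.factorial : ℝ)
                  * ((2*m+2-u.1-u.2).factorial : ℝ))⁻¹
              * Qd ω u.1 u.2 (2*m+2-u.1-u.2) f g h x
          else 0) := by
    rw [Finset.sum_sigma' (Finset.range (m+1)) (fun k => Finset.range (2*k+2)),
        ← Finset.sum_filter]
    refine Finset.sum_nbij' (fun z => (2*(m-z.1)+1, 2*z.1+1-z.2))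
      (fun u => ⟨m - (u.1-1)/2, 2*m+2-u.1-u.2⟩) ?_ ?_ ?_ ?_ ?_
    · rintro ⟨k, p⟩ hz
      simp only [Finset.mem_sigma, Finset.mem_range] at hz
      simp only [Finset.mem_filter, Finset.mem_product, Finset.mem_range]
      omega
    · rintro ⟨p, q⟩ hu
      simp only [Finset.mem_filter, Finset.mem_product, Finset.mem_range] at hu
      simp only [Finset.mem_sigma, Finset.mem_range]
      omega
    · rintro ⟨k, p⟩ hz
      simp only [Finset.mem_sigma, Finset.mem_range] at hz
      obtain ⟨hk, hp⟩ := hz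
      have e : m - (2*(m-k)+1-1)/2 = k := by omega
      have e' : 2*m+2-(2*(m-k)+1)-(2*k+1-p) = p := by omega
      simp only [e, e']
    · rintro ⟨p, q⟩ hu
      simp only [Finset.mem_filter, Finset.mem_product, Finset.mem_range] at hu
      have e : 2*(m - (m - (p-1)/2))+1 = p := by omega
      have e' : 2*(m-(p-1)/2)+1-(2*m+2-p-q) = q := by omega
      simp only [e, e']
    · rintro ⟨k, p⟩ hz
      simp only [Finset.mem_sigma, Finset.mem_range] at hz
      obtain ⟨hk, hp⟩ := hz
      dsimp only
      have e1 : 2*m+2-(2*(m-k)+1)-(2*k+1-p) = p := by omega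
      rw [e1]
      have hco := fact_coef (2*k+1) p (2*(m-k)+1) (by omega)
      linear_combination ((-1:ℝ)^(2*k+1-p) * Qd ω (2*(m-k)+1) (2*k+1-p) p f g h x) * hco
  rw [Rf, Rg, Rh, ← Finset.sum_add_distrib, ← Finset.sum_add_distrib]
  refine Finset.sum_eq_zero fun u _ => ?_
  obtain ⟨p, q⟩ := u
  dsimp only
  by_cases h1 : p + q ≤ 2*m+2
  · rcases Nat.mod_two_eq_zero_or_one p with hp | hp <;>
      rcases Nat.mod_two_eq_zero_or_one q with hq | hq
    · have hr : (2*m+2-p-q) % 2 = 0 := by omega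
      simp [hp, hq, hr]
    · have hr : (2*m+2-p-q) % 2 = 1 := by omega
      rw [if_pos ⟨hq, h1⟩, if_pos ⟨hr, h1⟩, if_neg (by simp [hp])]
      rw [(Nat.odd_iff.mpr hr).neg_one_pow, (Nat.even_iff.mpr hp).neg_one_pow]
      ring
    · have hr : (2*m+2-p-q) % 2 = 1 := by omega
      rw [if_neg (by simp [hq]), if_pos ⟨hr, h1⟩, if_pos ⟨hp, h1⟩]
      rw [(Nat.odd_iff.mpr hp).neg_one_pow, (Nat.even_iff.mpr hq).neg_one_pow]
      ring
    · have hr : (2*m+2-p-q) % 2 = 0 := by omega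
      rw [if_pos ⟨hq, h1⟩, if_neg (by simp [hr]), if_pos ⟨hp, h1⟩]
      rw [(Nat.even_iff.mpr hr).neg_one_pow, (Nat.odd_iff.mpr hq).neg_one_pow]
      ring
  · rw [if_neg (fun hc => h1 hc.2), if_neg (fun hc => h1 hc.2), if_neg (fun hc => h1 hc.2)]
    simp
end
end
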